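/- Let K be a field, F ∈ K[x]^{m×n}, s ∈ ℤ^m with s ≥ rdeg(F) entrywise, and τ a positive integer. Let M ∈ K[x]^{n×n} be column reduced with every column degree of M at least τ. Then every vector p ∈ Rel_M(F) with rdeg_s(p) < τ satisfies pF = 0, i.e. p ∈ Ker(F). -/

import Mathlib

/-!
If `p F = q M` with `q ≠ 0`, let `δ` be the largest degree of an entry of `q` and `v` the vector of
their coefficients of degree `δ`. The coefficient of degree `δ + deg M_{*,j}` of `(q M)_j` is
`(L v)_j`, where `L` is the leading matrix of the columns of `M`; `L` is invertible because `M` is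
column reduced, so some `(q M)_j` has degree at least `deg M_{*,j} ≥ τ`. On the other hand every
entry of `p F` has degree at most `max_i (deg p_i + s_i) < τ`.
-/

open Polynomial Matrix

noncomputable section

variable {K : Type*} [Field K]

/-- Degree of a univariate polynomial, viewed in `ℤ ∪ {⊥}`. -/
def pdegZ (p : K[X]) : WithBot ℤ := p.degree.map (Nat.cast : ℕ → ℤ)

/-- Shifted degree (`s`-degree) of a row vector. -/
def sdeg {n : ℕ} (s : Fin n → ℤ) (p : Fin n → K[X]) : WithBot ℤ :=
  Finset.univ.sup fun j => pdegZ (p j) + (s j : WithBot ℤ)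

/-- `s`-leading matrix of `P`. -/
def leadMat {m n : ℕ} (s : Fin n → ℤ) (P : Matrix (Fin m) (Fin n) K[X]) :
    Matrix (Fin m) (Fin n) K :=
  Matrix.of fun i j =>
    if pdegZ (P i j) + (s j : WithBot ℤ) = sdeg s (P i) then (P i j).leadingCoeff else 0

/-- `P` is `s`-reduced: its `s`-leading matrix has full row rank. -/
def IsShiftReduced {m n : ℕ} (s : Fin n → ℤ) (P : Matrix (Fin m) (Fin n) K[X]) : Prop :=
  (leadMat s P).rank = m

/-- `j` is the `s`-pivot index of the row `p`: the largest index where the `s`-degree is attained. -/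
def IsPivotIndex {n : ℕ} (s : Fin n → ℤ) (p : Fin n → K[X]) (j : Fin n) : Prop :=
  pdegZ (p j) + (s j : WithBot ℤ) = sdeg s p ∧
  ∀ j', j < j' → pdegZ (p j') + (s j' : WithBot ℤ) ≠ sdeg s p

/-- `P` is in `s`-weak Popov form: no zero row and strictly increasing `s`-pivot indices. -/
def IsWeakPopov {m n : ℕ} (s : Fin n → ℤ) (P : Matrix (Fin m) (Fin n) K[X]) : Prop :=
  (∀ i, P i ≠ 0) ∧ ∃ piv : Fin m → Fin n, StrictMono piv ∧ ∀ i, IsPivotIndex s (P i) (piv i)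

/-- The rows of `Kb` form a basis of the left kernel of `F`. -/
def IsKernelBasis {ℓ m : ℕ} {β : Type*} [Fintype β]
    (Kb : Matrix (Fin ℓ) (Fin m) K[X]) (F : Matrix (Fin m) β K[X]) : Prop :=
  (∀ i, Kb i ᵥ* F = 0) ∧
  LinearIndependent K[X] (fun i : Fin ℓ => Kb i) ∧
  ∀ p : Fin m → K[X], p ᵥ* F = 0 → ∃ u : Fin ℓ → K[X], p = u ᵥ* Kb

/-- Membership in the relation module `Rel_M(F)`. -/
def InRelModule {m n : ℕ} (M : Matrix (Fin n) (Fin n) K[X])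
    (F : Matrix (Fin m) (Fin n) K[X]) (p : Fin m → K[X]) : Prop :=
  ∃ q : Fin n → K[X], p ᵥ* F = q ᵥ* M

/-- The rows of `A` form a basis of the relation module `Rel_M(F)`. -/
def IsRelationBasis {ℓ m n : ℕ} (M : Matrix (Fin n) (Fin n) K[X])
    (A : Matrix (Fin ℓ) (Fin m) K[X]) (F : Matrix (Fin m) (Fin n) K[X]) : Prop :=
  (∀ i, InRelModule M F (A i)) ∧
  LinearIndependent K[X] (fun i : Fin ℓ => A i) ∧
  ∀ p : Fin m → K[X], InRelModule M F p → ∃ u : Fin ℓ → K[X], p = u ᵥ* A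

/-- Rank of a polynomial matrix: its rank over the fraction field `K(x)`. -/
def polyRank {α β : Type*} [Fintype β] (F : Matrix α β K[X]) : ℕ :=
  (F.map (algebraMap K[X] (RatFunc K))).rank

/-- Lexicographic comparison of tuples. -/
def lexLE {r n : ℕ} (a b : Fin r → Fin n) : Prop :=
  ∀ i, (∀ k, k < i → a k = b k) → a i ≤ b i

/-- `j` lists the column rank profile of `F`: the lexicographically smallest strictly
increasing tuple of `rank F` column indices selecting columns of full rank. -/
def IsColRankProfile {α : Type*} {n r : ℕ} (F : Matrix α (Fin n) K[X])
    (j : Fin r → Fin n) : Prop :=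
  StrictMono j ∧ polyRank F = r ∧ polyRank (F.submatrix id j) = r ∧
  ∀ j' : Fin r → Fin n, StrictMono j' → polyRank (F.submatrix id j') = r → lexLE j j'


/-- Degree of the `j`-th column of `M`. -/
def colDeg {K : Type*} [Field K] {m n : ℕ} (M : Matrix (Fin m) (Fin n) K[X]) (j : Fin n) :
    WithBot ℤ :=
  Finset.univ.sup fun i => pdegZ (M i j)

/-- `M` is column reduced: its transpose is `0`-reduced. -/
def IsColReduced {K : Type*} [Field K] {m n : ℕ} (M : Matrix (Fin m) (Fin n) K[X]) : Prop :=
  IsShiftReduced (0 : Fin m → ℤ) Mᵀ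

theorem Matrix.mulVec_injective_of_rank_eq_card {ι : Type*} [Fintype ι] {A : Matrix ι ι K}
    (h : A.rank = Fintype.card ι) : Function.Injective A.mulVec :=
  Matrix.mulVec_injective_iff.mpr <| linearIndependent_iff_card_eq_finrank_span.mpr <| by
    rw [Set.finrank, ← Matrix.rank_eq_finrank_span_cols, h]

theorem WithBot.map_natCast_finset_sup {ι : Type*} (s : Finset ι) (f : ι → WithBot ℕ) :
    (s.sup f).map (Nat.cast : ℕ → ℤ) = s.sup fun i => (f i).map (Nat.cast : ℕ → ℤ) :=
  Finset.apply_sup_eq_sup_comp_of_linearOrder _ (WithBot.monotone_map_iff.mpr Nat.mono_cast) rfl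

theorem Polynomial.ite_degree_eq_sup_leadingCoeff {R ι : Type*} [Semiring R] (s : Finset ι)
    (f : ι → R[X]) {k : ι} (hk : k ∈ s) :
    (if (f k).degree = s.sup (fun i => (f i).degree) then (f k).leadingCoeff else 0) =
      (f k).coeff (s.sup fun i => (f i).natDegree) := by
  by_cases hfk : f k = 0
  · simp [hfk]
  have hsup : (f k).natDegree ≤ s.sup fun i => (f i).natDegree :=
    Finset.le_sup (f := fun i => (f i).natDegree) hk
  have hiff : (f k).degree = s.sup (fun i => (f i).degree) ↔
      (f k).natDegree = s.sup fun i => (f i).natDegree := by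
    constructor
    · refine fun h => le_antisymm hsup (Finset.sup_le fun i hi => natDegree_le_natDegree ?_)
      exact h ▸ Finset.le_sup (f := fun i => (f i).degree) hi
    · refine fun h => le_antisymm (Finset.le_sup (f := fun i => (f i).degree) hk)
        (Finset.sup_le fun i hi => ?_)
      rw [degree_eq_natDegree hfk, h]
      exact (degree_le_natDegree).trans
        (WithBot.coe_le_coe.mpr (Finset.le_sup (f := fun i => (f i).natDegree) hi))
  split_ifs with h
  · rw [leadingCoeff, hiff.mp h]
  · exact (coeff_eq_zero_of_natDegree_lt (lt_of_le_of_ne hsup (mt hiff.mpr h))).symm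

theorem Polynomial.exists_coeff_sup_natDegree_ne_zero {R ι : Type*} [Semiring R] [Fintype ι]
    {f : ι → R[X]} (hf : f ≠ 0) :
    ∃ k, (f k).coeff (Finset.univ.sup fun i => (f i).natDegree) ≠ 0 := by
  obtain ⟨k₀, hk₀⟩ := Function.ne_iff.mp hf
  obtain ⟨k, -, hk⟩ :=
    Finset.exists_max_image Finset.univ (fun i => (f i).degree) ⟨k₀, Finset.mem_univ k₀⟩
  have hfk : f k ≠ 0 := fun h =>
    hk₀ (degree_eq_bot.mp (le_bot_iff.mp (by simpa [h] using hk k₀ (Finset.mem_univ k₀))))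
  have hsup : (Finset.univ.sup fun i => (f i).natDegree) = (f k).natDegree :=
    le_antisymm (Finset.sup_le fun i hi => natDegree_le_natDegree (hk i hi))
      (Finset.le_sup (f := fun i => (f i).natDegree) (Finset.mem_univ k))
  exact ⟨k, hsup ▸ leadingCoeff_ne_zero.mpr hfk⟩

theorem pdegZ_mul (p q : K[X]) : pdegZ (p * q) = pdegZ p + pdegZ q := by
  simp only [pdegZ, degree_mul]
  cases p.degree <;> cases q.degree <;> simp [← WithBot.coe_add]

theorem pdegZ_le_natCast_iff {p : K[X]} {d : ℕ} :
    pdegZ p ≤ ((d : ℤ) : WithBot ℤ) ↔ p.degree ≤ d :=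
  WithBot.map_le_iff (y := (d : WithBot ℕ)) _ Nat.cast_le

theorem natCast_le_pdegZ_iff {p : K[X]} {d : ℕ} :
    ((d : ℤ) : WithBot ℤ) ≤ pdegZ p ↔ (d : WithBot ℕ) ≤ p.degree :=
  WithBot.map_le_iff (x := (d : WithBot ℕ)) _ Nat.cast_le

theorem pdegZ_finset_sum_le {ι : Type*} (s : Finset ι) (f : ι → K[X]) :
    pdegZ (∑ i ∈ s, f i) ≤ s.sup fun i => pdegZ (f i) := by
  simp only [pdegZ]
  rw [← WithBot.map_natCast_finset_sup]
  exact WithBot.monotone_map_iff.mpr Nat.mono_cast (degree_sum_le s f)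

theorem sdeg_zero_eq_map_sup_degree {n : ℕ} (v : Fin n → K[X]) :
    sdeg 0 v = (Finset.univ.sup fun j => (v j).degree).map (Nat.cast : ℕ → ℤ) := by
  rw [WithBot.map_natCast_finset_sup]
  simp [sdeg, pdegZ]

theorem pdegZ_add_le_sdeg {n : ℕ} (s : Fin n → ℤ) (v : Fin n → K[X]) (j : Fin n) :
    pdegZ (v j) + (s j : WithBot ℤ) ≤ sdeg s v :=
  Finset.le_sup (f := fun j => pdegZ (v j) + (s j : WithBot ℤ)) (Finset.mem_univ j)

def colNatDeg {m n : ℕ} (M : Matrix (Fin m) (Fin n) K[X]) (j : Fin n) : ℕ :=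
  Finset.univ.sup fun i => (M i j).natDegree

theorem natDegree_le_colNatDeg {m n : ℕ} (M : Matrix (Fin m) (Fin n) K[X]) (i : Fin m)
    (j : Fin n) : (M i j).natDegree ≤ colNatDeg M j :=
  Finset.le_sup (f := fun i => (M i j).natDegree) (Finset.mem_univ i)

theorem colDeg_le_colNatDeg {m n : ℕ} (M : Matrix (Fin m) (Fin n) K[X]) (j : Fin n) :
    colDeg M j ≤ ((colNatDeg M j : ℤ) : WithBot ℤ) :=
  Finset.sup_le fun i _ => pdegZ_le_natCast_iff.mpr <|
    degree_le_natDegree.trans <| WithBot.coe_le_coe.mpr <| natDegree_le_colNatDeg M i j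

-- Also for a zero column, where `colDeg` is `⊥` while `colNatDeg` is `0`.
theorem leadMat_zero_transpose_apply {m n : ℕ} (M : Matrix (Fin m) (Fin n) K[X]) (j : Fin n)
    (k : Fin m) : leadMat 0 Mᵀ j k = (M k j).coeff (colNatDeg M j) := by
  rw [colNatDeg, ← Polynomial.ite_degree_eq_sup_leadingCoeff Finset.univ (fun i => M i j)
    (Finset.mem_univ k)]
  simp only [leadMat, sdeg_zero_eq_map_sup_degree, Matrix.of_apply, Matrix.transpose_apply,
    Pi.zero_apply, WithBot.coe_zero, add_zero, pdegZ,
    (WithBot.map_injective (Nat.cast_injective (R := ℤ))).eq_iff]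

theorem coeff_vecMul_add_colNatDeg {m n : ℕ} (M : Matrix (Fin m) (Fin n) K[X])
    {q : Fin m → K[X]} {δ : ℕ} (hδ : ∀ k, (q k).natDegree ≤ δ) (j : Fin n) :
    ((q ᵥ* M) j).coeff (δ + colNatDeg M j) = (leadMat 0 Mᵀ *ᵥ fun k => (q k).coeff δ) j := by
  simp only [Matrix.vecMul, Matrix.mulVec, dotProduct, finsetSum_coeff,
    leadMat_zero_transpose_apply]
  refine Finset.sum_congr rfl fun k _ => ?_
  rw [coeff_mul_add_eq_of_natDegree_le (hδ k) (natDegree_le_colNatDeg M k j), mul_comm]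

theorem IsColReduced.exists_colDeg_le_pdegZ_vecMul {n : ℕ} {M : Matrix (Fin n) (Fin n) K[X]}
    (hM : IsColReduced M) {q : Fin n → K[X]} (hq : q ≠ 0) :
    ∃ j, colDeg M j ≤ pdegZ ((q ᵥ* M) j) := by
  set δ := Finset.univ.sup fun k => (q k).natDegree
  set v : Fin n → K := fun k => (q k).coeff δ
  have hv : v ≠ 0 := by
    obtain ⟨k, hk⟩ := exists_coeff_sup_natDegree_ne_zero hq
    exact Function.ne_iff.mpr ⟨k, hk⟩
  have hinj : Function.Injective (leadMat 0 Mᵀ).mulVec :=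
    Matrix.mulVec_injective_of_rank_eq_card (by rw [Fintype.card_fin]; exact hM)
  obtain ⟨j, hj⟩ : ∃ j, (leadMat 0 Mᵀ *ᵥ v) j ≠ 0 :=
    Function.ne_iff.mp fun h => hv (hinj (h.trans (Matrix.mulVec_zero _).symm))
  rw [← coeff_vecMul_add_colNatDeg M (fun k => Finset.le_sup (f := fun k => (q k).natDegree)
    (Finset.mem_univ k)) j] at hj
  refine ⟨j, (colDeg_le_colNatDeg M j).trans (natCast_le_pdegZ_iff.mpr ?_)⟩
  exact (WithBot.coe_le_coe.mpr (Nat.le_add_left _ δ)).trans (le_degree_of_ne_zero hj)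

theorem pdegZ_vecMul_lt {m n : ℕ} {F : Matrix (Fin m) (Fin n) K[X]} {s : Fin m → ℤ}
    (hs : ∀ i, sdeg 0 (F i) ≤ (s i : WithBot ℤ)) {p : Fin m → K[X]} {t : WithBot ℤ}
    (hp : sdeg s p < t) (j : Fin n) : pdegZ ((p ᵥ* F) j) < t := by
  refine (pdegZ_finset_sum_le Finset.univ fun i => p i * F i j).trans_lt
    ((Finset.sup_lt_iff (bot_le.trans_lt hp)).mpr fun i _ => ?_)
  have hF : pdegZ (F i j) ≤ (s i : WithBot ℤ) := by
    simpa using (pdegZ_add_le_sdeg 0 (F i) j).trans (hs i)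
  calc pdegZ (p i * F i j) = pdegZ (p i) + pdegZ (F i j) := pdegZ_mul _ _
    _ ≤ pdegZ (p i) + s i := add_le_add_right hF _
    _ ≤ sdeg s p := pdegZ_add_le_sdeg s p i
    _ < t := hp

theorem stmt13_general {K : Type*} [Field K] {m n : ℕ}
    (F : Matrix (Fin m) (Fin n) K[X])
    (s : Fin m → ℤ) (hs : ∀ i, sdeg (0 : Fin n → ℤ) (F i) ≤ (s i : WithBot ℤ))
    (τ : ℤ)
    (M : Matrix (Fin n) (Fin n) K[X]) (hMred : IsColReduced M)
    (hMdeg : ∀ j, (τ : WithBot ℤ) ≤ colDeg M j)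
    (p : Fin m → K[X]) (hp : InRelModule M F p)
    (hdeg : sdeg s p < (τ : WithBot ℤ)) :
    p ᵥ* F = 0 := by
  obtain ⟨q, hq⟩ := hp
  obtain rfl | hq0 := eq_or_ne q 0
  · rw [hq, zero_vecMul]
  obtain ⟨j, hj⟩ := hMred.exists_colDeg_le_pdegZ_vecMul hq0
  have hsmall := pdegZ_vecMul_lt hs hdeg j
  rw [hq] at hsmall
  exact absurd ((hMdeg j).trans hj) (not_le.mpr hsmall)

/-- Relations of small `s`-degree lie in the kernel. -/
theorem stmt13 {K : Type*} [Field K] {m n : ℕ}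
    (F : Matrix (Fin m) (Fin n) K[X])
    (s : Fin m → ℤ) (hs : ∀ i, sdeg (0 : Fin n → ℤ) (F i) ≤ (s i : WithBot ℤ))
    (τ : ℤ) (hτ : 0 < τ)
    (M : Matrix (Fin n) (Fin n) K[X]) (hMred : IsColReduced M)
    (hMdeg : ∀ j, (τ : WithBot ℤ) ≤ colDeg M j)
    (p : Fin m → K[X]) (hp : InRelModule M F p)
    (hdeg : sdeg s p < (τ : WithBot ℤ)) :
    p ᵥ* F = 0 :=
  stmt13_general F s hs τ M hMred hMdeg p hp hdeg

end
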